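/- arXiv:2512.02174 — 2 statements merged into one kernel-verified Lean document; each statement's English description precedes it below -/
import Mathlib

section
/- Let M, N ≥ 1 be real numbers, α a real number, and suppose |α - a/q| < 1/q² where q is a positive integer and a an integer with gcd(a,q) = 1. Then the sum over integers m with 1 ≤ m ≤ M of min{N, 1/‖αm‖} is O(MN/q + (M + q)·log q). -/
open Finset

/-- Distance from a real number to the nearest integer. -/
noncomputable def nint (x : ℝ) : ℝ := |x - round x|

/-- `min {N, 1/‖x‖}` with the convention that the value is `N` when `‖x‖ = 0`. -/
noncomputable def mink (N x : ℝ) : ℝ := if x = 0 then N else min N x⁻¹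

lemma nint_nonneg (x : ℝ) : 0 ≤ nint x := abs_nonneg _

lemma nint_le_abs_sub (x : ℝ) (n : ℤ) : nint x ≤ |x - n| := by
  unfold nint
  by_cases h : round x = n
  · rw [h]
  · have h1 : |x - round x| ≤ 1/2 := abs_sub_round x
    have h2 : (1:ℝ) ≤ |(round x : ℝ) - n| := by
      have : round x - n ≠ 0 := sub_ne_zero.mpr h
      have : (1:ℤ) ≤ |round x - n| := Int.one_le_abs (sub_ne_zero.mpr h)
      calc (1:ℝ) = ((1:ℤ):ℝ) := by norm_num
        _ ≤ ((|round x - n| : ℤ) : ℝ) := by exact_mod_cast this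
        _ = |(round x : ℝ) - n| := by push_cast [Int.cast_abs]; rfl
    have h3 : |(round x : ℝ) - n| ≤ |(round x:ℝ) - x| + |x - n| := by
      have := abs_sub_le ((round x : ℝ)) x (n:ℝ); linarith
    rw [abs_sub_comm (round x : ℝ) x] at h3
    linarith

lemma nint_add_int (x : ℝ) (n : ℤ) : nint (x + n) = nint x := by
  unfold nint
  rw [round_add_intCast]
  congr 1
  push_cast
  ring

lemma le_nint (x : ℝ) (h : |x| ≤ 1/2) : |x| ≤ nint x := by
  unfold nint
  by_cases h0 : round x = 0
  · rw [h0]; norm_num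
  · have h2 : (1:ℝ) ≤ |(round x : ℝ)| := by
      have : (1:ℤ) ≤ |round x| := Int.one_le_abs h0
      calc (1:ℝ) = ((1:ℤ):ℝ) := by norm_num
        _ ≤ ((|round x| : ℤ):ℝ) := by exact_mod_cast this
        _ = |(round x:ℝ)| := by rw [Int.cast_abs]
    have h3 : |(round x:ℝ)| ≤ |x| + |x - round x| := by
      have := abs_sub_le ((round x:ℝ)) x 0
      simp only [sub_zero] at this
      rw [abs_sub_comm (round x:ℝ) x] at this
      linarith [this, abs_nonneg x]
    linarith

lemma nint_ge (x y : ℝ) : nint x - |y| ≤ nint (x + y) := by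
  have h1 : nint x ≤ |x - round (x+y)| := nint_le_abs_sub x (round (x+y))
  have h2 : |x - round (x+y)| ≤ |x + y - round (x+y)| + |y| := by
    have := abs_sub_le (x + y) (x) ((round (x+y) : ℝ))
    have h' := abs_sub_le (x) (x+y) ((round (x+y):ℝ))
    have : |x - (x+y)| = |y| := by rw [abs_sub_comm]; congr 1; ring
    linarith [abs_sub_le (x) (x+y) ((round (x+y):ℝ)), this]
  unfold nint at h1 ⊢
  linarith

lemma mink_le_N (N x : ℝ) : mink N x ≤ N := by
  unfold mink; split <;> simp

lemma mink_nonneg (N x : ℝ) (hN : 0 ≤ N) (hx : 0 ≤ x) : 0 ≤ mink N x := by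
  unfold mink
  split
  · exact hN
  · exact le_min hN (inv_nonneg.mpr hx)

lemma mink_le_inv (N x c : ℝ) (hc : 0 < c) (hcx : c ≤ x) : mink N x ≤ c⁻¹ := by
  unfold mink
  have hx : x ≠ 0 := ne_of_gt (lt_of_lt_of_le hc hcx)
  rw [if_neg hx]
  exact le_trans (min_le_right _ _) (inv_anti₀ hc hcx)

lemma abs_valMinAbs_le (q : ℕ) [NeZero q] (v : ZMod q) :
    2 * |v.valMinAbs| ≤ q := by
  obtain ⟨h1, h2⟩ := v.valMinAbs_mem_Ioc
  rcases abs_cases (v.valMinAbs) with ⟨h,_⟩|⟨h,_⟩ <;> omega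

lemma nint_int_div (q : ℕ) [NeZero q] (c : ℤ) :
    |(((c : ZMod q).valMinAbs : ℝ))| / q ≤ nint ((c:ℝ)/q) := by
  set w : ℤ := (c : ZMod q).valMinAbs with hw
  have hq0 : 0 < q := Nat.pos_of_ne_zero (NeZero.ne q)
  have hqR : (0:ℝ) < q := by exact_mod_cast hq0
  have hcong : ((w : ZMod q)) = ((c : ZMod q)) := ZMod.coe_valMinAbs _
  have hdvd : (q:ℤ) ∣ c - w := by
    rw [ZMod.intCast_eq_intCast_iff] at hcong
    exact hcong.dvd
  obtain ⟨j, hj⟩ := hdvd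
  have hcr : (c:ℝ)/q = (w:ℝ)/q + j := by
    have : (c:ℝ) = w + q * j := by
      have : c = w + q * j := by linarith [hj]
      exact_mod_cast this
    rw [this]; field_simp
  rw [hcr, nint_add_int]
  have h2 : |(w:ℝ)/q| ≤ 1/2 := by
    have := abs_valMinAbs_le q (c : ZMod q)
    have hwa : (|w| : ℝ) ≤ q / 2 := by
      have : (2 * |w| : ℤ) ≤ (q:ℤ) := this
      have h9 : (2 * |w| : ℝ) ≤ (q:ℝ) := by exact_mod_cast this
      rw [Int.cast_abs] at h9
      linarith
    rw [abs_div, abs_of_pos hqR]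
    rw [div_le_div_iff₀ hqR (by norm_num : (0:ℝ) < 2)]
    push_cast [Int.cast_abs] at hwa ⊢
    linarith
  have := le_nint ((w:ℝ)/q) h2
  calc |(w:ℝ)|/q = |(w:ℝ)/q| := by rw [abs_div, abs_of_pos hqR]
    _ ≤ nint ((w:ℝ)/q) := this

lemma tail_log : ∀ q : ℕ, (∑ n ∈ Ioc 1 q, ((n:ℝ))⁻¹) ≤ Real.log q := by
  intro q
  induction q with
  | zero => simp
  | succ q ih =>
    rcases Nat.eq_zero_or_pos q with h|h
    · subst h; simp
    · rw [Finset.sum_Ioc_succ_top (by omega : 1 ≤ q)]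
      have key : Real.log q + ((q:ℝ)+1)⁻¹ ≤ Real.log (q+1) := by
        have hq : (0:ℝ) < q := by exact_mod_cast h
        have h1 : Real.log ((q:ℝ)/(q+1)) ≤ (q:ℝ)/(q+1) - 1 :=
          Real.log_le_sub_one_of_pos (by positivity)
        rw [Real.log_div (by positivity) (by positivity)] at h1
        have h2 : (q:ℝ)/(q+1) - 1 = -((q:ℝ)+1)⁻¹ := by field_simp; ring
        rw [h2] at h1
        linarith
      push_cast
      push_cast at ih
      linarith

lemma int_sum_inv (q : ℕ) :
    (∑ j ∈ Ioc (1:ℤ) (q:ℤ), ((j:ℝ))⁻¹) = ∑ n ∈ Ioc 1 q, ((n:ℝ))⁻¹ := by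
  refine Finset.sum_nbij' (fun j => j.toNat) (fun n => (n:ℤ)) ?_ ?_ ?_ ?_ ?_
  · intro j hj; simp only [Finset.mem_Ioc] at hj ⊢; omega
  · intro n hn; simp only [Finset.mem_Ioc] at hn ⊢; omega
  · intro j hj; simp only [Finset.mem_Ioc] at hj; simp; omega
  · intro n hn; simp
  · intro j hj
    simp only [Finset.mem_Ioc] at hj
    have h0 : ((j.toNat : ℕ) : ℝ) = (j:ℝ) := by
      have := Int.toNat_of_nonneg (by omega : (0:ℤ) ≤ j)
      exact_mod_cast congrArg (fun z : ℤ => (z:ℝ)) this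
    simp only [h0]

lemma res_sum (q : ℕ) [NeZero q] (W : ℝ) (hW : 0 ≤ W) :
    ∑ v : ZMod q,
      (if |v.valMinAbs| ≤ 1 then W else 4*q/|((v.valMinAbs : ℤ):ℝ)|)
      ≤ 4*W + 8*q*Real.log q := by
  have hq : 0 < q := Nat.pos_of_ne_zero (NeZero.ne q)
  set G : ℤ → ℝ := fun j => if |j| ≤ 1 then W else 4*q/|(j:ℝ)| with hG
  have hGnn : ∀ j, 0 ≤ G j := by
    intro j
    simp only [hG]
    split
    · exact hW
    · positivity
  have hGeven : ∀ j, G (-j) = G j := by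
    intro j; simp only [hG, abs_neg, Int.cast_neg]
  have hlog : 0 ≤ Real.log q := Real.log_natCast_nonneg q
  -- sum over univ = sum over image of valMinAbs
  have h1 : (∑ v : ZMod q,
      (if |v.valMinAbs| ≤ 1 then W else 4*q/|((v.valMinAbs : ℤ):ℝ)|))
      = ∑ j ∈ Finset.univ.image (ZMod.valMinAbs : ZMod q → ℤ), G j := by
    rw [Finset.sum_image (fun a _ b _ h => ZMod.injective_valMinAbs h)]
  rw [h1]
  have hsub : Finset.univ.image (ZMod.valMinAbs : ZMod q → ℤ) ⊆ Ioc (-(q:ℤ)-1) q := by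
    intro j hj
    simp only [Finset.mem_image] at hj
    obtain ⟨v, _, rfl⟩ := hj
    have := abs_valMinAbs_le q v
    simp only [Finset.mem_Ioc]
    rcases abs_cases (v.valMinAbs) with ⟨h,_⟩|⟨h,_⟩ <;> omega
  have h2 : ∑ j ∈ Finset.univ.image (ZMod.valMinAbs : ZMod q → ℤ), G j
      ≤ ∑ j ∈ Ioc (-(q:ℤ)-1) q, G j :=
    Finset.sum_le_sum_of_subset_of_nonneg hsub (fun j _ _ => hGnn j)
  -- split the interval
  have hq1 : (1:ℤ) ≤ q := by exact_mod_cast hq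
  have hu1 : Ioc (-(q:ℤ)-1) (-1) ∪ Ioc (-1:ℤ) q = Ioc (-(q:ℤ)-1) q :=
    Finset.Ioc_union_Ioc_eq_Ioc (by omega) (by omega)
  have hu2 : Ioc (-1:ℤ) 1 ∪ Ioc (1:ℤ) q = Ioc (-1:ℤ) q :=
    Finset.Ioc_union_Ioc_eq_Ioc (by omega) (by omega)
  have hdgen : ∀ u v w : ℤ, Disjoint (Ioc u v) (Ioc v w) := by
    intro u v w
    rw [Finset.disjoint_left]
    intro x hx hx'
    simp only [Finset.mem_Ioc] at hx hx'
    omega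
  have hd1 : Disjoint (Ioc (-(q:ℤ)-1) (-1)) (Ioc (-1:ℤ) q) := hdgen _ _ _
  have hd2 : Disjoint (Ioc (-1:ℤ) 1) (Ioc (1:ℤ) q) := hdgen _ _ _
  have e1 : ∑ j ∈ Ioc (-(q:ℤ)-1) q, G j
      = (∑ j ∈ Ioc (-(q:ℤ)-1) (-1), G j) + ∑ j ∈ Ioc (-1:ℤ) q, G j := by
    rw [← hu1, Finset.sum_union hd1]
  have e2 : ∑ j ∈ Ioc (-1:ℤ) q, G j
      = (∑ j ∈ Ioc (-1:ℤ) 1, G j) + ∑ j ∈ Ioc (1:ℤ) q, G j := by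
    rw [← hu2, Finset.sum_union hd2]
  -- negative part equals a positive part
  have e3 : (∑ j ∈ Ioc (-(q:ℤ)-1) (-1), G j) = ∑ j ∈ Ioc (0:ℤ) q, G j := by
    apply Finset.sum_nbij' (fun j => -j) (fun j => -j)
    · intro j hj; simp only [Finset.mem_Ioc] at hj ⊢; omega
    · intro j hj; simp only [Finset.mem_Ioc] at hj ⊢; omega
    · intro j _; ring
    · intro j _; ring
    · intro j _; rw [hGeven]
  have e4 : ∑ j ∈ Ioc (0:ℤ) q, G j = (∑ j ∈ Ioc (0:ℤ) 1, G j) + ∑ j ∈ Ioc (1:ℤ) q, G j := by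
    rw [← Finset.sum_union (hdgen _ _ _),
      Finset.Ioc_union_Ioc_eq_Ioc (by omega) (by omega)]
  have e5 : ∑ j ∈ Ioc (0:ℤ) 1, G j = W := by
    have : Ioc (0:ℤ) 1 = {1} := by
      ext x; simp only [Finset.mem_Ioc, Finset.mem_singleton]; omega
    rw [this, Finset.sum_singleton]
    simp [hG]
  have e6 : ∑ j ∈ Ioc (-1:ℤ) 1, G j = 2*W := by
    have : Ioc (-1:ℤ) 1 = {0, 1} := by
      ext x; simp only [Finset.mem_Ioc, Finset.mem_insert, Finset.mem_singleton]; omega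
    rw [this, Finset.sum_insert (by simp), Finset.sum_singleton]
    simp [hG]
    ring
  have e7 : ∑ j ∈ Ioc (1:ℤ) q, G j ≤ 4*q*Real.log q := by
    have : ∀ j ∈ Ioc (1:ℤ) q, G j = 4*q*((j:ℝ))⁻¹ := by
      intro j hj
      simp only [Finset.mem_Ioc] at hj
      have h2j : ¬ (|j| ≤ 1) := by
        rcases abs_cases j with ⟨h,_⟩|⟨h,_⟩ <;> omega
      simp only [hG, if_neg h2j]
      rw [abs_of_pos (by exact_mod_cast (by omega : (0:ℤ) < j) : (0:ℝ) < (j:ℝ))]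
      ring
    rw [Finset.sum_congr rfl this, ← Finset.mul_sum, int_sum_inv]
    have hT := tail_log q
    have hq0 : (0:ℝ) ≤ 4*q := by positivity
    exact mul_le_mul_of_nonneg_left hT hq0
  linarith [h2, e1, e2, e3, e4, e5, e6, e7]

lemma sum_block (q : ℕ) [NeZero q] (a b : ℤ) (ha : Int.gcd a q = 1)
    (L : ℕ) (S : Finset ℕ) (hS : S ⊆ Ioc L (L + q))
    (f : ℕ → ℝ) (G : ZMod q → ℝ) (hG : ∀ v, 0 ≤ G v)
    (hfG : ∀ m ∈ S, f m ≤ G (((a*m + b : ℤ) : ZMod q))) :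
    ∑ m ∈ S, f m ≤ ∑ v : ZMod q, G v := by
  have hinj : ∀ m1 ∈ S, ∀ m2 ∈ S,
      ((a*(m1:ℤ) + b : ℤ) : ZMod q) = ((a*(m2:ℤ) + b : ℤ) : ZMod q) → m1 = m2 := by
    intro m1 hm1 m2 hm2 h
    rw [ZMod.intCast_eq_intCast_iff] at h
    have hdvd : (q:ℤ) ∣ (m2 - m1 : ℤ) * a := by
      have := h.dvd
      have h3 : (a*(m2:ℤ) + b) - (a*(m1:ℤ) + b) = ((m2:ℤ) - m1)*a := by ring
      rwa [h3] at this
    have hdvd2 : (q:ℤ) ∣ ((m2:ℤ) - m1 : ℤ) :=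
      Int.dvd_of_dvd_mul_left_of_gcd_one hdvd (by rw [Int.gcd_comm]; exact ha)
    have hq := Nat.pos_of_ne_zero (NeZero.ne q)
    have hb1 := hS hm1
    have hb2 := hS hm2
    simp only [Finset.mem_Ioc] at hb1 hb2
    have : ((m2:ℤ) - m1) = 0 := by
      apply Int.eq_zero_of_abs_lt_dvd hdvd2
      rcases abs_cases ((m2:ℤ) - m1) with ⟨h',_⟩|⟨h',_⟩ <;> push_cast <;> omega
    omega
  calc ∑ m ∈ S, f m ≤ ∑ m ∈ S, G (((a*m + b : ℤ) : ZMod q)) := Finset.sum_le_sum hfG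
    _ = ∑ v ∈ S.image (fun m : ℕ => ((a*m + b : ℤ) : ZMod q)), G v :=
        (Finset.sum_image hinj).symm
    _ ≤ ∑ v : ZMod q, G v :=
        Finset.sum_le_sum_of_subset_of_nonneg (Finset.subset_univ _) (fun v _ _ => hG v)

lemma blockA (q : ℕ) [NeZero q] (a : ℤ) (ha : Int.gcd a q = 1) (δ N : ℝ)
    (hδ : |δ| ≤ 1/(q:ℝ)^2) (hN : 0 ≤ N) (k : ℕ) :
    ∑ m ∈ Ioc (k*q) (k*q + q), mink N (nint (((a:ℝ)/q + δ) * m))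
      ≤ 4*N + 8*q*Real.log q := by
  have hq : 0 < q := Nat.pos_of_ne_zero (NeZero.ne q)
  have hqR : (0:ℝ) < q := by exact_mod_cast hq
  set b : ℤ := round (δ*(q:ℝ)^2*k) with hb
  set G : ZMod q → ℝ := fun v =>
    if |v.valMinAbs| ≤ 1 then N else 4*q/|((v.valMinAbs : ℤ):ℝ)| with hG
  have hGnn : ∀ v, 0 ≤ G v := by
    intro v; simp only [hG]
    split
    · exact hN
    · positivity
  have key : ∀ m ∈ Ioc (k*q) (k*q + q),
      mink N (nint (((a:ℝ)/q + δ) * m)) ≤ G (((a*m + b : ℤ) : ZMod q)) := by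
    intro m hm
    simp only [Finset.mem_Ioc] at hm
    set c : ℤ := a*m + b with hc
    set w : ℤ := ((c : ZMod q)).valMinAbs with hwdef
    set ε : ℝ := (δ*q*k - b/q) + δ*((m:ℝ) - k*q) with hε
    have hdecomp : ((a:ℝ)/q + δ) * m = (c:ℝ)/q + ε := by
      rw [hc, hε]; push_cast; field_simp; ring
    have h1 : |δ*(q:ℝ)*k - b/q| ≤ 1/(2*q) := by
      have hrw : δ*(q:ℝ)*k - b/q = (δ*(q:ℝ)^2*k - b)/q := by field_simp
      rw [hrw, abs_div, abs_of_pos hqR]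
      have := abs_sub_round (δ*(q:ℝ)^2*k)
      rw [div_le_div_iff₀ hqR (by positivity)]
      calc |δ*(q:ℝ)^2*k - b| * (2*q) ≤ (1/2) * (2*q) := by
            apply mul_le_mul_of_nonneg_right _ (by positivity)
            exact this
        _ = 1 * q := by ring
    have h2 : |δ*((m:ℝ) - k*q)| ≤ 1/q := by
      rw [abs_mul]
      have hm1 : |(m:ℝ) - k*q| ≤ q := by
        rw [abs_le]
        constructor
        · have : ((k*q:ℕ):ℝ) ≤ (m:ℝ) := by exact_mod_cast hm.1.le
          push_cast at this; linarith
        · have : (m:ℝ) ≤ ((k*q + q:ℕ):ℝ) := by exact_mod_cast hm.2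
          push_cast at this; linarith
      calc |δ| * |(m:ℝ) - k*q| ≤ (1/(q:ℝ)^2) * q :=
            mul_le_mul hδ hm1 (abs_nonneg _) (by positivity)
        _ = 1/q := by field_simp
    have hεb : |ε| ≤ 3/(2*q) := by
      rw [hε]
      calc |(δ*q*k - b/q) + δ*((m:ℝ) - k*q)|
          ≤ |δ*(q:ℝ)*k - b/q| + |δ*((m:ℝ) - k*q)| := abs_add_le _ _
        _ ≤ 1/(2*q) + 1/q := add_le_add h1 h2
        _ = 3/(2*q) := by field_simp; ring
    have hnint : |(w:ℝ)|/q - 3/(2*q) ≤ nint (((a:ℝ)/q + δ) * m) := by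
      rw [hdecomp]
      have hlow := nint_ge ((c:ℝ)/q) ε
      have hdiv := nint_int_div q c
      rw [← hwdef] at hdiv
      linarith
    by_cases hcase : |w| ≤ 1
    · simp only [hG, ← hc, ← hwdef, if_pos hcase]
      exact mink_le_N _ _
    · have hw2 : (2:ℤ) ≤ |w| := by omega
      have hw2R : (2:ℝ) ≤ |(w:ℝ)| := by
        rw [← Int.cast_abs]; exact_mod_cast hw2
      have hlb : |(w:ℝ)|/(4*q) ≤ nint (((a:ℝ)/q + δ) * m) := by
        have hdiff : |(w:ℝ)|/q - 3/(2*q) - |(w:ℝ)|/(4*q) = (3*|(w:ℝ)| - 6)/(4*q) := by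
          field_simp; ring
        have hpos : (0:ℝ) ≤ (3*|(w:ℝ)| - 6)/(4*q) := by
          apply div_nonneg _ (by positivity)
          linarith
        linarith
      have hmle := mink_le_inv N _ (|(w:ℝ)|/(4*q)) (by positivity) hlb
      simp only [hG, ← hc, ← hwdef, if_neg hcase]
      calc mink N (nint (((a:ℝ)/q + δ) * m)) ≤ (|(w:ℝ)|/(4*q))⁻¹ := hmle
        _ = 4*q/|((w:ℤ):ℝ)| := by rw [inv_div]
  calc ∑ m ∈ Ioc (k*q) (k*q + q), mink N (nint (((a:ℝ)/q + δ) * m))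
      ≤ ∑ v : ZMod q, G v :=
        sum_block q a b ha (k*q) _ subset_rfl _ G hGnn key
    _ ≤ 4*N + 8*q*Real.log q := res_sum q N hN

lemma blockB (q : ℕ) [NeZero q] (a : ℤ) (ha : Int.gcd a q = 1) (δ N M : ℝ)
    (hδ : |δ| ≤ 1/(q:ℝ)^2) (hN : 1 ≤ N) (hM : 1 ≤ M) (hMq : M < q) :
    ∑ m ∈ Icc 1 ⌊M⌋₊, mink N (nint (((a:ℝ)/q + δ) * m))
      ≤ 4*(2*q + 2*M*N/q) + 8*q*Real.log q := by
  have hq : 0 < q := Nat.pos_of_ne_zero (NeZero.ne q)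
  have hqR : (0:ℝ) < q := by exact_mod_cast hq
  have hfl : (⌊M⌋₊:ℝ) ≤ M := Nat.floor_le (by linarith)
  have hflq : ⌊M⌋₊ < q := by
    rw [Nat.floor_lt (by linarith)]
    exact_mod_cast hMq
  set W : ℝ := 2*q + 2*M*N/q with hW
  have hWnn : 0 ≤ W := by
    rw [hW]; positivity
  set G : ZMod q → ℝ := fun v =>
    if |v.valMinAbs| ≤ 1 then W else 4*q/|((v.valMinAbs : ℤ):ℝ)| with hG
  have hGnn : ∀ v, 0 ≤ G v := by
    intro v; simp only [hG]
    split
    · exact hWnn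
    · positivity
  have key : ∀ m ∈ Icc 1 ⌊M⌋₊,
      mink N (nint (((a:ℝ)/q + δ) * m)) ≤ G (((a*m + 0 : ℤ) : ZMod q)) := by
    intro m hm
    simp only [Finset.mem_Icc] at hm
    have hmq : m < q := lt_of_le_of_lt hm.2 hflq
    have hmR : (1:ℝ) ≤ (m:ℝ) := by exact_mod_cast hm.1
    have hmqR : (m:ℝ) ≤ q := by exact_mod_cast hmq.le
    set c : ℤ := a*m + 0 with hc
    set w : ℤ := ((c : ZMod q)).valMinAbs with hwdef
    have hdecomp : ((a:ℝ)/q + δ) * m = (c:ℝ)/q + δ*m := by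
      rw [hc]; push_cast; field_simp; ring
    have hεb : |δ*(m:ℝ)| ≤ (m:ℝ)/(q:ℝ)^2 := by
      rw [abs_mul, abs_of_nonneg (by linarith : (0:ℝ) ≤ (m:ℝ))]
      calc |δ| * (m:ℝ) ≤ (1/(q:ℝ)^2) * m :=
            mul_le_mul_of_nonneg_right hδ (by linarith)
        _ = (m:ℝ)/(q:ℝ)^2 := by ring
    have hnint : |(w:ℝ)|/q - (m:ℝ)/(q:ℝ)^2 ≤ nint (((a:ℝ)/q + δ) * m) := by
      rw [hdecomp]
      have hlow := nint_ge ((c:ℝ)/q) (δ*m)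
      have hdiv := nint_int_div q c
      rw [← hwdef] at hdiv
      linarith
    -- w ≠ 0
    have hwne : w ≠ 0 := by
      intro h0
      have : ((c : ZMod q)) = 0 := by
        have := ZMod.coe_valMinAbs (c : ZMod q)
        rw [← hwdef, h0] at this
        simpa using this.symm
      rw [hc] at this
      have hdvd : (q:ℤ) ∣ a*m + 0 := (ZMod.intCast_zmod_eq_zero_iff_dvd _ q).mp this
      rw [add_zero] at hdvd
      have hdvd2 : (q:ℤ) ∣ (m:ℤ) :=
        Int.dvd_of_dvd_mul_left_of_gcd_one
          (by rwa [mul_comm] at hdvd) (by rw [Int.gcd_comm]; exact ha)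
      have hle : (q:ℤ) ≤ (m:ℤ) := Int.le_of_dvd (by exact_mod_cast hm.1) hdvd2
      omega
    by_cases hcase : |w| ≤ 1
    · -- |w| = 1
      simp only [hG, ← hc, ← hwdef, if_pos hcase]
      have hw1 : |w| = 1 := by rcases abs_cases w with ⟨h,_⟩|⟨h,_⟩ <;> omega
      have hw1R : |(w:ℝ)| = 1 := by rw [← Int.cast_abs, hw1]; norm_num
      by_cases hhalf : 2*(m:ℝ) ≤ q
      · -- small m : nint ≥ 1/(2q), mink ≤ 2q ≤ W
        have hnint2 : 1/(2*(q:ℝ)) ≤ nint (((a:ℝ)/q + δ) * m) := by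
          have : (m:ℝ)/(q:ℝ)^2 ≤ 1/(2*q) := by
            rw [div_le_div_iff₀ (by positivity) (by positivity)]
            nlinarith
          rw [hw1R] at hnint
          have h3 : 1/(q:ℝ) - 1/(2*q) = 1/(2*q) := by field_simp; ring
          linarith
        have := mink_le_inv N _ (1/(2*(q:ℝ))) (by positivity) hnint2
        calc mink N (nint (((a:ℝ)/q + δ) * m)) ≤ (1/(2*(q:ℝ)))⁻¹ := this
          _ = 2*q := by rw [one_div, inv_inv]
          _ ≤ W := by
              have h0 : (0:ℝ) ≤ 2*M*N/(q:ℝ) := by positivity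
              rw [hW]; linarith
      · -- large m : N ≤ 2MN/q ≤ W
        have hqm : (q:ℝ) < 2*M := by
          push_neg at hhalf
          calc (q:ℝ) < 2*(m:ℝ) := hhalf
            _ ≤ 2*M := by
              have : (m:ℝ) ≤ ⌊M⌋₊ := by exact_mod_cast hm.2
              linarith
        have hNW : N ≤ W := by
          rw [hW]
          have h1 : N ≤ 2*M*N/q := by
            rw [le_div_iff₀ hqR]
            nlinarith
          have : (0:ℝ) ≤ 2*q := by positivity
          linarith
        exact le_trans (mink_le_N _ _) hNW
    · -- |w| ≥ 2
      have hw2 : (2:ℤ) ≤ |w| := by rcases abs_cases w with ⟨h,_⟩|⟨h,_⟩ <;> omega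
      have hw2R : (2:ℝ) ≤ |(w:ℝ)| := by rw [← Int.cast_abs]; exact_mod_cast hw2
      have hlb : |(w:ℝ)|/(2*q) ≤ nint (((a:ℝ)/q + δ) * m) := by
        have hm2 : (m:ℝ)/(q:ℝ)^2 ≤ 1/q := by
          rw [div_le_div_iff₀ (by positivity) hqR]
          nlinarith
        have hdiff : |(w:ℝ)|/q - 1/q - |(w:ℝ)|/(2*q) = (|(w:ℝ)| - 2)/(2*q) := by
          field_simp; ring
        have hpos : (0:ℝ) ≤ (|(w:ℝ)| - 2)/(2*q) := by
          apply div_nonneg _ (by positivity)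
          linarith
        linarith
      have hmle := mink_le_inv N _ (|(w:ℝ)|/(2*q)) (by positivity) hlb
      simp only [hG, ← hc, ← hwdef, if_neg hcase]
      calc mink N (nint (((a:ℝ)/q + δ) * m)) ≤ (|(w:ℝ)|/(2*q))⁻¹ := hmle
        _ = 2*q/|((w:ℤ):ℝ)| := by rw [inv_div]
        _ ≤ 4*q/|((w:ℤ):ℝ)| := by
          have hwpos : (0:ℝ) < |((w:ℤ):ℝ)| := by linarith
          exact (div_le_div_iff_of_pos_right hwpos).mpr (by linarith)
  have hsub : Icc 1 ⌊M⌋₊ ⊆ Ioc 0 (0 + q) := by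
    intro x hx
    simp only [Finset.mem_Icc] at hx
    simp only [Finset.mem_Ioc]
    omega
  calc ∑ m ∈ Icc 1 ⌊M⌋₊, mink N (nint (((a:ℝ)/q + δ) * m))
      ≤ ∑ v : ZMod q, G v :=
        sum_block q a 0 ha 0 _ hsub _ G hGnn key
    _ ≤ 4*W + 8*q*Real.log q := res_sum q W hWnn

lemma blocks_sum (q : ℕ) (f : ℕ → ℝ) (hf : ∀ m, 0 ≤ f m) (B : ℝ)
    (hblock : ∀ k, ∑ m ∈ Ioc (k*q) (k*q + q), f m ≤ B) :
    ∀ K : ℕ, ∑ m ∈ Ioc 0 (K*q), f m ≤ K * B := by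
  intro K
  induction K with
  | zero => simp
  | succ K ih =>
    have hdis : Disjoint (Ioc 0 (K*q)) (Ioc (K*q) (K*q + q)) := by
      rw [Finset.disjoint_left]
      intro x hx hx'
      simp only [Finset.mem_Ioc] at hx hx'
      omega
    have hun : Ioc 0 (K*q) ∪ Ioc (K*q) (K*q + q) = Ioc 0 ((K+1)*q) := by
      rw [Finset.Ioc_union_Ioc_eq_Ioc (Nat.zero_le _) (Nat.le_add_right _ _)]
      congr 1
      ring
    have hB : 0 ≤ B := le_trans (Finset.sum_nonneg (fun m _ => hf m)) (hblock 0)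
    calc ∑ m ∈ Ioc 0 ((K+1)*q), f m
        = (∑ m ∈ Ioc 0 (K*q), f m) + ∑ m ∈ Ioc (K*q) (K*q + q), f m := by
          rw [← hun, Finset.sum_union hdis]
      _ ≤ K * B + B := add_le_add ih (hblock K)
      _ = ((K+1:ℕ):ℝ) * B := by push_cast; ring


/-- Standard estimate: if `|α - a/q| < 1/q²` with `(a, q) = 1`, then
`∑_{1 ≤ m ≤ M} min {N, 1/‖αm‖} ≪ MN/q + (M + q) log q`,
with an absolute implied constant. -/
theorem standard_estimate :
    ∃ C : ℝ, 0 < C ∧ ∀ (M N α : ℝ) (q : ℕ) (a : ℤ),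
      1 ≤ M → 1 ≤ N → 0 < q → Int.gcd a q = 1 →
      |α - (a : ℝ) / q| < 1 / (q : ℝ) ^ 2 →
      ∑ m ∈ Finset.Icc 1 ⌊M⌋₊, mink N (nint (α * m)) ≤
        C * (M * N / q + (M + q) * Real.log q) := by
  refine ⟨100, by norm_num, ?_⟩
  intro M N α q a hM hN hq ha hα
  haveI : NeZero q := ⟨hq.ne'⟩
  have hqR : (0:ℝ) < q := by exact_mod_cast hq
  have hq1R : (1:ℝ) ≤ q := by exact_mod_cast hq
  set δ : ℝ := α - (a:ℝ)/q with hδdef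
  have hδ : |δ| ≤ 1/(q:ℝ)^2 := le_of_lt hα
  have hαred : (a:ℝ)/q + δ = α := by rw [hδdef]; ring
  have hlogq : 0 ≤ Real.log q := Real.log_natCast_nonneg q
  have hMN : (0:ℝ) ≤ M*N/q := by positivity
  simp only [← hαred]
  rcases Nat.lt_or_ge q 2 with hq2 | hq2
  · -- q = 1
    have hq1 : q = 1 := by omega
    subst hq1
    have hsum : ∑ m ∈ Finset.Icc 1 ⌊M⌋₊, mink N (nint (((a:ℝ)/1 + δ) * m)) ≤ M * N := by
      calc ∑ m ∈ Finset.Icc 1 ⌊M⌋₊, mink N (nint (((a:ℝ)/1 + δ) * m))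
          ≤ ∑ m ∈ Finset.Icc 1 ⌊M⌋₊, N :=
            Finset.sum_le_sum (fun m _ => mink_le_N _ _)
        _ = (⌊M⌋₊ : ℝ) * N := by
            rw [Finset.sum_const, Nat.card_Icc]
            simp [nsmul_eq_mul]
        _ ≤ M * N := by
          apply mul_le_mul_of_nonneg_right _ (by linarith)
          exact Nat.floor_le (by linarith)
    simp only [Nat.cast_one, Real.log_one, mul_zero, add_zero, div_one] at hsum ⊢
    linarith
  · have hq2R : (2:ℝ) ≤ q := by exact_mod_cast hq2
    have hlog2 : (0.6931471803:ℝ) < Real.log 2 := Real.log_two_gt_d9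
    have hlogq2 : Real.log 2 ≤ Real.log q := by
      apply Real.log_le_log (by norm_num)
      exact_mod_cast hq2R
    have hhalf : (1:ℝ)/2 ≤ Real.log q := by linarith
    rcases le_or_gt (q:ℝ) M with hqM | hqM
    · -- many blocks
      set f : ℕ → ℝ := fun m => mink N (nint (((a:ℝ)/q + δ) * m)) with hf
      have hfnn : ∀ m, 0 ≤ f m := fun m => mink_nonneg _ _ (by linarith) (nint_nonneg _)
      set B : ℝ := 4*N + 8*q*Real.log q with hB
      have hblock : ∀ k, ∑ m ∈ Ioc (k*q) (k*q + q), f m ≤ B :=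
        fun k => blockA q a ha δ N hδ (by linarith) k
      set K : ℕ := ⌊M⌋₊ / q + 1 with hK
      have hsub : Finset.Icc 1 ⌊M⌋₊ ⊆ Ioc 0 (K*q) := by
        intro x hx
        simp only [Finset.mem_Icc] at hx
        simp only [Finset.mem_Ioc]
        have h1 : ⌊M⌋₊ < K * q := by
          rw [hK]
          exact (Nat.div_lt_iff_lt_mul hq).mp (Nat.lt_succ_self _)
        omega
      have hstep : ∑ m ∈ Finset.Icc 1 ⌊M⌋₊, f m ≤ (K:ℝ) * B := by
        calc ∑ m ∈ Finset.Icc 1 ⌊M⌋₊, f m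
            ≤ ∑ m ∈ Ioc 0 (K*q), f m :=
              Finset.sum_le_sum_of_subset_of_nonneg hsub (fun m _ _ => hfnn m)
          _ ≤ (K:ℝ) * B := blocks_sum q f hfnn B hblock K
      have hKle : (K:ℝ) ≤ 2*M/q := by
        have h1 : ((⌊M⌋₊/q : ℕ):ℝ) ≤ (⌊M⌋₊:ℝ)/q := Nat.cast_div_le
        have h2 : (⌊M⌋₊:ℝ) ≤ M := Nat.floor_le (by linarith)
        have h3 : ((⌊M⌋₊/q : ℕ):ℝ) ≤ M/q := by
          apply le_trans h1
          exact (div_le_div_iff_of_pos_right hqR).mpr h2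
        have h4 : (1:ℝ) ≤ M/q := by
          rw [le_div_iff₀ hqR]; linarith
        rw [hK]
        push_cast
        have : 2*M/q = M/q + M/q := by ring
        linarith
      have hBnn : 0 ≤ B := by rw [hB]; positivity
      have hfin : (K:ℝ)*B ≤ (2*M/q)*B := mul_le_mul_of_nonneg_right hKle hBnn
      have hexp : (2*M/q)*B = 8*(M*N/q) + 16*(M*Real.log q) := by
        rw [hB]; field_simp; ring
      have hMlog : 0 ≤ M*Real.log q := by positivity
      have hqlog : 0 ≤ (q:ℝ)*Real.log q := by positivity
      calc ∑ m ∈ Finset.Icc 1 ⌊M⌋₊, f m ≤ (K:ℝ)*B := hstep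
        _ ≤ (2*M/q)*B := hfin
        _ = 8*(M*N/q) + 16*(M*Real.log q) := hexp
        _ ≤ 100 * (M * N / q + (M + q) * Real.log q) := by nlinarith
    · -- single partial block
      have hmain := blockB q a ha δ N M hδ hN hM hqM
      have hq8 : 8*(q:ℝ) ≤ 16*(q:ℝ)*Real.log q := by nlinarith
      have hMlog : 0 ≤ M*Real.log q := by positivity
      have hqlog : 0 ≤ (q:ℝ)*Real.log q := by positivity
      have hexp : 4*(2*(q:ℝ) + 2*M*N/q) + 8*q*Real.log q
          = 8*(q:ℝ) + 8*(M*N/q) + 8*((q:ℝ)*Real.log q) := by ring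
      calc ∑ m ∈ Finset.Icc 1 ⌊M⌋₊, mink N (nint (((a:ℝ)/q + δ) * m))
          ≤ 4*(2*(q:ℝ) + 2*M*N/q) + 8*q*Real.log q := hmain
        _ ≤ 100 * (M * N / q + (M + q) * Real.log q) := by nlinarith
end

section
/- Let M, N ≥ 1 be real numbers, α real, q a positive integer with q > 2, a an integer with gcd(a,q) = 1 and |α - a/q| < 1/q². If M ≤ q/2, then the sum over 1 ≤ m ≤ M of min{N, 1/‖αm‖} is O(q·log q). -/
open Finset

lemma res_lower (q s t : ℤ) (hs0 : 0 < s) (hsq : s < q) (ht : t % q = s) :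
    min s (q - s) ≤ |t| := by
  have hq : 0 < q := lt_trans hs0 hsq
  have hd : t = q * (t / q) + s := by rw [← ht]; exact (Int.mul_ediv_add_emod t q).symm
  rcases le_or_gt 0 (t / q) with h | h
  · have : 0 ≤ q * (t / q) := mul_nonneg hq.le h
    rw [abs_of_pos (by omega)]; omega
  · have h1 : t / q ≤ -1 := by omega
    have : q * (t / q) ≤ q * (-1) := mul_le_mul_of_nonneg_left h1 hq.le
    rw [abs_of_neg (by omega)]; omega

lemma sub_mul_emod' (a k q : ℤ) : (a - k * q) % q = a % q := by
  conv_lhs => rw [sub_eq_add_neg, ← neg_mul]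
  exact Int.add_mul_emod_self_right _ _ _

lemma pointwise_bound (q : ℕ) (a : ℤ) (α N : ℝ) (m : ℕ) (hq : 2 < q)
    (hgcd : Int.gcd a q = 1) (hα : |α - (a : ℝ) / q| < 1 / (q : ℝ) ^ 2)
    (hm1 : 1 ≤ m) (hm2 : 2 * m ≤ q) :
    mink N (nint (α * m)) ≤
      2 * q / (2 * ((min ((a * m % q).toNat) (q - (a * m % q).toNat) : ℕ) : ℝ) - 1) := by
  have hq0 : (0:ℝ) < q := by positivity
  set sZ : ℤ := a * (m : ℤ) % q with hsZ
  have hqZ : (0:ℤ) < q := by exact_mod_cast (by omega : 0 < q)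
  have hs0 : 0 < sZ := by
    rcases (Int.emod_nonneg (a * m) (by omega : (q:ℤ) ≠ 0)).lt_or_eq with h | h
    · exact h
    · exfalso
      have hdvd : (q:ℤ) ∣ a * m := Int.dvd_of_emod_eq_zero h.symm
      have hgcd' : Int.gcd (q:ℤ) a = 1 := by rw [Int.gcd_comm]; exact hgcd
      have : (q:ℤ) ∣ (m:ℤ) := Int.dvd_of_dvd_mul_right_of_gcd_one hdvd hgcd'
      have := Int.le_of_dvd (by exact_mod_cast hm1) this
      omega
  have hsq : sZ < q := Int.emod_lt_of_pos _ hqZ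
  set rZ : ℤ := min sZ (q - sZ) with hrZ
  have hr1 : 1 ≤ rZ := by omega
  have hr1R : (1:ℝ) ≤ (rZ:ℝ) := by exact_mod_cast hr1
  have hcast : ((min ((a * m % q).toNat) (q - (a * m % q).toNat) : ℕ) : ℝ) = (rZ : ℝ) := by
    have h1 : ((a * m % q).toNat : ℤ) = sZ := Int.toNat_of_nonneg hs0.le
    have : ((min ((a * m % q).toNat) (q - (a * m % q).toNat) : ℕ) : ℤ) = rZ := by
      push_cast; omega
    exact_mod_cast congrArg (fun z : ℤ => (z : ℝ)) this
  rw [hcast]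
  set k : ℤ := round (α * m) with hk
  have hZ : rZ ≤ |a * (m:ℤ) - k * q| := by
    refine res_lower q sZ _ hs0 hsq ?_
    simpa [hsZ] using sub_mul_emod' (a * m) k q
  have h1 : (rZ:ℝ) / q ≤ |(a:ℝ) * m / q - k| := by
    have hZ' : (rZ:ℝ) ≤ |(a:ℝ) * m - k * q| := by
      have : ((|a * (m:ℤ) - k * q| : ℤ) : ℝ) = |(a:ℝ) * m - k * q| := by
        push_cast [Int.cast_abs]; ring_nf
      calc (rZ:ℝ) ≤ ((|a * (m:ℤ) - k * q| : ℤ) : ℝ) := by exact_mod_cast hZ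
        _ = _ := this
    have heq : |(a:ℝ) * m / q - k| = |(a:ℝ) * m - k * q| / q := by
      rw [← abs_of_pos hq0, ← abs_div]
      congr 1
      field_simp
      rw [abs_of_pos hq0]; ring
    rw [heq]
    gcongr
  have h2 : |(a:ℝ) * m / q - α * m| ≤ 1 / (2 * q) := by
    have hm : (m:ℝ) ≤ q / 2 := by
      have : ((2 * m : ℕ) : ℝ) ≤ (q:ℝ) := by exact_mod_cast hm2
      push_cast at this; linarith
    have : |(a:ℝ) * m / q - α * m| = |α - (a:ℝ)/q| * m := by
      rw [← abs_sub_comm, show α * m - (a:ℝ) * m / q = (α - (a:ℝ)/q) * m by ring,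
        abs_mul, abs_of_nonneg (by positivity : (0:ℝ) ≤ (m:ℝ))]
    rw [this]
    calc |α - (a:ℝ)/q| * m ≤ (1 / (q:ℝ)^2) * (q/2) := by
          apply mul_le_mul hα.le hm (by positivity) (by positivity)
      _ = 1 / (2 * q) := by field_simp
  have key : (2 * (rZ:ℝ) - 1) / (2 * q) ≤ nint (α * m) := by
    have tri := abs_sub_abs_le_abs_sub ((a:ℝ) * m / q - k) ((a:ℝ) * m / q - α * m)
    have htri : |(a:ℝ) * m / q - k| - |(a:ℝ) * m / q - α * m| ≤ |α * m - k| := by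
      calc _ ≤ |((a:ℝ) * m / q - k) - ((a:ℝ) * m / q - α * m)| := tri
        _ = |α * m - k| := by ring_nf
    have heq : (2 * (rZ:ℝ) - 1) / (2 * q) = (rZ:ℝ)/q - 1/(2*q) := by
      field_simp
    rw [nint, ← hk, heq]
    linarith
  have hpos : 0 < nint (α * m) := by
    refine lt_of_lt_of_le ?_ key
    apply div_pos (by linarith) (by linarith)
  rw [mink, if_neg hpos.ne']
  calc min N (nint (α * m))⁻¹ ≤ (nint (α * m))⁻¹ := min_le_right _ _
    _ ≤ ((2 * (rZ:ℝ) - 1) / (2 * q))⁻¹ := by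
        apply inv_anti₀ (by apply div_pos (by linarith) (by linarith)) key
    _ = 2 * q / (2 * (rZ:ℝ) - 1) := inv_div _ _

lemma s_pos_lt (q : ℕ) (a : ℤ) (m : ℕ) (hq : 2 < q) (hgcd : Int.gcd a q = 1)
    (hm1 : 1 ≤ m) (hm2 : 2 * m ≤ q) :
    1 ≤ (a * m % q).toNat ∧ (a * m % q).toNat < q := by
  have hqZ : (0:ℤ) < q := by exact_mod_cast (by omega : 0 < q)
  have hnn : 0 ≤ a * (m:ℤ) % q := Int.emod_nonneg _ (by omega)
  have hlt : a * (m:ℤ) % q < q := Int.emod_lt_of_pos _ hqZ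
  have hne : a * (m:ℤ) % q ≠ 0 := by
    intro h
    have hdvd : (q:ℤ) ∣ a * m := Int.dvd_of_emod_eq_zero h
    have hgcd' : Int.gcd (q:ℤ) a = 1 := by rw [Int.gcd_comm]; exact hgcd
    have : (q:ℤ) ∣ (m:ℤ) := Int.dvd_of_dvd_mul_right_of_gcd_one hdvd hgcd'
    have := Int.le_of_dvd (by exact_mod_cast hm1) this
    omega
  omega

lemma s_inj (q : ℕ) (a : ℤ) (m1 m2 : ℕ) (hq : 2 < q) (hgcd : Int.gcd a q = 1)
    (h11 : 1 ≤ m1) (h12 : 2 * m1 ≤ q) (h21 : 1 ≤ m2) (h22 : 2 * m2 ≤ q)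
    (hs : (a * m1 % q).toNat = (a * m2 % q).toNat) : m1 = m2 := by
  have hqZ : (0:ℤ) < q := by exact_mod_cast (by omega : 0 < q)
  have n1 : 0 ≤ a * (m1:ℤ) % q := Int.emod_nonneg _ (by omega)
  have n2 : 0 ≤ a * (m2:ℤ) % q := Int.emod_nonneg _ (by omega)
  have e1 : a * (m1:ℤ) % q = a * (m2:ℤ) % q := by omega
  have hd : (q:ℤ) ∣ a * (m2:ℤ) - a * (m1:ℤ) := Int.ModEq.dvd e1
  rw [← mul_sub] at hd
  have hgcd' : Int.gcd (q:ℤ) a = 1 := by rw [Int.gcd_comm]; exact hgcd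
  obtain ⟨c, hc⟩ := Int.dvd_of_dvd_mul_right_of_gcd_one hd hgcd'
  rcases lt_trichotomy c 0 with h | h | h
  · have : (q:ℤ) * c ≤ q * (-1) := mul_le_mul_of_nonneg_left (by omega) hqZ.le
    have h3 : (m2:ℤ) - m1 ≤ -q := by rw [hc]; omega
    omega
  · rw [h, mul_zero] at hc; omega
  · have : (q:ℤ) * 1 ≤ q * c := mul_le_mul_of_nonneg_left (by omega) hqZ.le
    have h3 : (q:ℤ) ≤ (m2:ℤ) - m1 := by rw [hc]; omega
    omega


/-- If `q > 2`, `|α - a/q| < 1/q²` with `(a, q) = 1` and `M ≤ q/2`, then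
`∑_{1 ≤ m ≤ M} min {N, 1/‖αm‖} ≪ q log q`, with an absolute implied constant. -/
theorem standard_estimate_small_M :
    ∃ C : ℝ, 0 < C ∧ ∀ (M N α : ℝ) (q : ℕ) (a : ℤ),
      1 ≤ M → 1 ≤ N → 2 < q → Int.gcd a q = 1 →
      |α - (a : ℝ) / q| < 1 / (q : ℝ) ^ 2 →
      M ≤ (q : ℝ) / 2 →
      ∑ m ∈ Finset.Icc 1 ⌊M⌋₊, mink N (nint (α * m)) ≤
        C * (q * Real.log q) := by
  refine ⟨8, by norm_num, ?_⟩
  intro M N α q a hM hN hq hgcd hα hMq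
  have hq0 : (0:ℝ) < q := by exact_mod_cast (by omega : 0 < q)
  set K := ⌊M⌋₊ with hK
  have hKb : ∀ m ∈ Icc 1 K, 1 ≤ m ∧ 2 * m ≤ q := by
    intro m hm
    rw [mem_Icc] at hm
    have h1 : (K:ℝ) ≤ M := Nat.floor_le (by linarith)
    have h2 : ((2 * K : ℕ):ℝ) ≤ (q:ℝ) := by push_cast; linarith
    have h3 : 2 * K ≤ q := by exact_mod_cast h2
    omega
  set s : ℕ → ℕ := fun m => (a * m % q).toNat with hs
  set r : ℕ → ℕ := fun m => min (s m) (q - s m) with hr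
  set F : ℕ → ℝ := fun m => 2 * q / (2 * (r m : ℝ) - 1) with hF
  have step1 : ∑ m ∈ Icc 1 K, mink N (nint (α * m)) ≤ ∑ m ∈ Icc 1 K, F m := by
    refine sum_le_sum fun m hm => ?_
    obtain ⟨h1, h2⟩ := hKb m hm
    exact pointwise_bound q a α N m hq hgcd hα h1 h2
  have maps : ∀ m ∈ Icc 1 K, r m ∈ Icc 1 q := by
    intro m hm
    obtain ⟨h1, h2⟩ := hKb m hm
    obtain ⟨hs1, hs2⟩ := s_pos_lt q a m hq hgcd h1 h2
    rw [mem_Icc]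
    constructor <;> simp only [hr, hs] at * <;> omega
  have fib := Finset.sum_fiberwise_of_maps_to maps F
  have card_le : ∀ t ∈ Icc 1 q, ((Icc 1 K).filter (fun m => r m = t)).card ≤ 2 := by
    intro t _
    have hsub : (Icc 1 K).filter (fun m => r m = t) ⊆
        (Icc 1 K).filter (fun m => s m = t) ∪ (Icc 1 K).filter (fun m => s m = q - t) := by
      intro m hm
      rw [mem_filter] at hm
      obtain ⟨hmem, hrm⟩ := hm
      obtain ⟨h1, h2⟩ := hKb m hmem
      obtain ⟨hs1, hs2⟩ := s_pos_lt q a m hq hgcd h1 h2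
      rw [mem_union, mem_filter, mem_filter]
      have hs1' : 1 ≤ s m := hs1
      have hs2' : s m < q := hs2
      simp only [hr] at hrm
      by_cases hst : s m = t
      · left; exact ⟨hmem, hst⟩
      · right; refine ⟨hmem, ?_⟩; omega
    have hone : ∀ u : ℕ, ((Icc 1 K).filter (fun m => s m = u)).card ≤ 1 := by
      intro u
      rw [Finset.card_le_one]
      intro m1 hm1 m2 hm2
      rw [mem_filter] at hm1 hm2
      obtain ⟨ha1, hb1⟩ := hm1
      obtain ⟨ha2, hb2⟩ := hm2
      obtain ⟨h11, h12⟩ := hKb m1 ha1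
      obtain ⟨h21, h22⟩ := hKb m2 ha2
      have heq : s m1 = s m2 := by rw [hb1, hb2]
      exact s_inj q a m1 m2 hq hgcd h11 h12 h21 h22 heq
    calc ((Icc 1 K).filter (fun m => r m = t)).card
        ≤ _ := Finset.card_le_card hsub
      _ ≤ _ + _ := Finset.card_union_le _ _
      _ ≤ 1 + 1 := add_le_add (hone t) (hone (q - t))
      _ = 2 := rfl
  have step2 : ∑ m ∈ Icc 1 K, F m ≤ ∑ t ∈ Icc 1 q, 2 * (2 * q / (2 * (t:ℝ) - 1)) := by
    rw [← fib]
    refine sum_le_sum fun t ht => ?_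
    have hinner : ∑ m ∈ (Icc 1 K).filter (fun m => r m = t), F m =
        ((Icc 1 K).filter (fun m => r m = t)).card • (2 * (q:ℝ) / (2 * (t:ℝ) - 1)) := by
      rw [← Finset.sum_const]
      refine sum_congr rfl fun m hm => ?_
      rw [mem_filter] at hm
      simp only [hF, hm.2]
    rw [hinner, nsmul_eq_mul]
    have ht1 : 1 ≤ t := (mem_Icc.mp ht).1
    have hpos : (0:ℝ) ≤ 2 * (q:ℝ) / (2 * (t:ℝ) - 1) := by
      apply div_nonneg (by positivity)
      have : (1:ℝ) ≤ (t:ℝ) := by exact_mod_cast ht1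
      linarith
    have := card_le t ht
    calc (((Icc 1 K).filter (fun m => r m = t)).card : ℝ) * (2 * (q:ℝ) / (2 * (t:ℝ) - 1))
        ≤ 2 * (2 * (q:ℝ) / (2 * (t:ℝ) - 1)) := by
          apply mul_le_mul_of_nonneg_right _ hpos
          exact_mod_cast this
      _ = _ := rfl
  have step3 : ∑ t ∈ Icc 1 q, 2 * (2 * q / (2 * (t:ℝ) - 1)) ≤
      ∑ t ∈ Icc 1 q, 4 * q * ((t:ℝ))⁻¹ := by
    refine sum_le_sum fun t ht => ?_
    have ht1 : (1:ℝ) ≤ (t:ℝ) := by exact_mod_cast (mem_Icc.mp ht).1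
    have h1 : (t:ℝ) ≤ 2 * (t:ℝ) - 1 := by linarith
    have h2 : (0:ℝ) < (t:ℝ) := by linarith
    rw [show (4:ℝ) * q * ((t:ℝ))⁻¹ = 2 * (2 * q / (t:ℝ)) by field_simp; ring]
    gcongr
  have hlogq : 1 ≤ Real.log q := by
    have h3 : (3:ℝ) ≤ q := by exact_mod_cast (by omega : 3 ≤ q)
    have : Real.exp 1 ≤ 3 := (Real.exp_one_lt_d9.le.trans (by norm_num))
    calc (1:ℝ) ≤ Real.log 3 := by
          rw [Real.le_log_iff_exp_le (by norm_num)]; exact this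
      _ ≤ Real.log q := Real.log_le_log (by norm_num) h3
  have step4 : ∑ t ∈ Icc 1 q, 4 * (q:ℝ) * ((t:ℝ))⁻¹ ≤ 8 * ((q:ℝ) * Real.log q) := by
    rw [← Finset.mul_sum]
    have hhar : ∑ t ∈ Icc 1 q, ((t:ℝ))⁻¹ ≤ 1 + Real.log q := by
      have := harmonic_le_one_add_log q
      rw [harmonic_eq_sum_Icc] at this
      push_cast at this
      exact this
    calc 4 * (q:ℝ) * ∑ t ∈ Icc 1 q, ((t:ℝ))⁻¹
        ≤ 4 * (q:ℝ) * (1 + Real.log q) := by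
          apply mul_le_mul_of_nonneg_left hhar (by positivity)
      _ ≤ 8 * ((q:ℝ) * Real.log q) := by nlinarith
  linarith
end
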